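/- Let L = {β, θ, γ} ∈ 𝓛 be a line of 𝕊 contained in 𝓟, and let α ∈ P ∪ P' with d(α,β) = d(α,θ) = 2 in 𝕊. Then α is collinear with γ in 𝕊. -/

import Mathlib

/- Common setup: the generalized quadrangle of order (2,2) on the edges of a
   6-element set, the near hexagon 𝓢 = ℍ₃, and the near hexagon 𝕊 = DSp(6,2). -/

/-- An edge: a 2-element subset of `Fin 6`. -/
abbrev Edge : Type := {e : Finset (Fin 6) // e.card = 2}

/-- `perp A` is `A^⊥`: the set of edges equal to or disjoint from every element of `A`. -/
def perp (A : Set Edge) : Set Edge := {y | ∀ x ∈ A, x = y ∨ Disjoint x.1 y.1}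

/-- A factor: a set of three pairwise disjoint edges (a perfect matching of `Fin 6`). -/
def IsFactor (T : Set Edge) : Prop :=
  T.ncard = 3 ∧ T.Pairwise (fun x y => Disjoint x.1 y.1)

/-- A triad: a set of three pairwise non-collinear (i.e. pairwise intersecting) distinct
    edges. -/
def IsTriad (T : Set Edge) : Prop :=
  T.ncard = 3 ∧ T.Pairwise (fun x y => ¬ Disjoint x.1 y.1)

/-- A complete triad: a triad not contained in a set of four pairwise non-collinear edges. -/
def IsCompleteTriad (T : Set Edge) : Prop :=
  IsTriad T ∧
    ¬ ∃ U : Set Edge, T ⊆ U ∧ U.ncard = 4 ∧ U.Pairwise (fun x y => ¬ Disjoint x.1 y.1)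

/-- The point set 𝓟 of 𝓢 : pairs `(x,u)` of edges with `x = u` or `x ∩ u = ∅`. -/
def NPoint : Type := {p : Edge × Edge // p.1 = p.2 ∨ Disjoint p.1.1 p.2.1}

/-- The lines 𝓛 of 𝓢 : sets `{(x, σ x) : x ∈ T}` where `T` is a factor or a complete
    triad and `σ : T → T^⊥` is a bijection. -/
def IsLine (L : Set NPoint) : Prop :=
  ∃ (T : Set Edge) (σ : Edge → Edge),
    (IsFactor T ∨ IsCompleteTriad T) ∧ Set.BijOn σ T (perp T) ∧
    L = {p : NPoint | p.1.1 ∈ T ∧ p.1.2 = σ p.1.1}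

/-- The collinearity graph of 𝓢. -/
def NG : SimpleGraph NPoint where
  Adj α β := α ≠ β ∧ ∃ L, IsLine L ∧ α ∈ L ∧ β ∈ L
  symm := ⟨fun _ _ ⟨h, L, hL, ha, hb⟩ => ⟨h.symm, L, hL, hb, ha⟩⟩
  loopless := ⟨fun _ h => h.1 rfl⟩

/-- The point set ℙ of 𝕊 : the disjoint union 𝓟 ⊔ P ⊔ P' where `P` and `P'` are two
    copies of the edge set. -/
def BPoint : Type := NPoint ⊕ Edge ⊕ Edge

/-- Embedding of 𝓟 into ℙ. -/
def inS (p : NPoint) : BPoint := Sum.inl p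

/-- Embedding of the first copy `P` of the edge set into ℙ (an edge `x` gives `x ∈ P`). -/
def inP (x : Edge) : BPoint := Sum.inr (Sum.inl x)

/-- Embedding of the second copy `P'` of the edge set into ℙ (an edge `u` gives `u' ∈ P'`). -/
def inP' (u : Edge) : BPoint := Sum.inr (Sum.inr u)

/-- The lines 𝕃 of 𝕊 : the lines of 𝓛 together with the lines `{x, (x,u), u'}`
    for `(x,u) ∈ 𝓟` (the latter being the lines of type `𝕃₁`). -/
def IsBLine (L : Set BPoint) : Prop :=
  (∃ L₀ : Set NPoint, IsLine L₀ ∧ L = inS '' L₀) ∨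
  (∃ p : NPoint, L = {inP p.1.1, inS p, inP' p.1.2})

/-- The collinearity graph of 𝕊. -/
def BG : SimpleGraph BPoint where
  Adj α β := α ≠ β ∧ ∃ L, IsBLine L ∧ α ∈ L ∧ β ∈ L
  symm := ⟨fun _ _ ⟨h, L, hL, ha, hb⟩ => ⟨h.symm, L, hL, hb, ha⟩⟩
  loopless := ⟨fun _ h => h.1 rfl⟩

/-! Write `β, θ, γ` as `(b, σ b), (t, σ t), (g, σ g)`, where `T = {b, t, g}` and `σ : T → T^⊥` is a
bijection. If `T` is a factor then `T^⊥ = T`; if `T` is a complete triad then `T` consists of the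
three edges inside a 3-set `A` and `T^⊥` of the three edges inside its complement. In both cases
`{e₁, e₂}^⊥ ⊆ T^⊥` for distinct `e₁, e₂ ∈ T`, and `{e₁, e₂}^⊥ ⊆ T` for distinct `e₁, e₂ ∈ T^⊥`.

An edge `y ∈ P` is at distance 2 from `(x, σ x)` only if `y ≠ x` and `y ∈ (σ x)^⊥`, and `u' ∈ P'`
only if `u ≠ σ x` and `u ∈ x^⊥`. Hence `α = y` forces `y ∈ {σ b, σ t}^⊥ ⊆ T`, so `y = g`, and
`α = u'` forces `u ∈ {b, t}^⊥ ⊆ T^⊥ = σ T`, so `u = σ g`; either way `α` lies on the line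
`{g, (g, σ g), (σ g)'}`. -/

open Finset

namespace Finset

variable {α : Type*} [DecidableEq α] {s t A : Finset α}

theorem card_union_eq_three_of_not_disjoint (hs : #s = 2) (ht : #t = 2) (hst : s ≠ t)
    (h : ¬Disjoint s t) : #(s ∪ t) = 3 := by
  have hpos : 0 < #(s ∩ t) := card_pos.2 (not_disjoint_iff_nonempty_inter.1 h)
  have hlt : #(s ∩ t) < 2 := hs ▸ card_lt_card ⟨inter_subset_left, fun hsub =>
    hst (eq_of_subset_of_card_le (hsub.trans inter_subset_right) (by omega))⟩
  have := card_union_add_card_inter s t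
  omega

theorem not_disjoint_of_subset_of_card_eq_three (hA : #A = 3) (hs : #s = 2) (ht : #t = 2)
    (hsA : s ⊆ A) (htA : t ⊆ A) : ¬Disjoint s t := fun h => by
  have := card_le_card (union_subset hsA htA)
  rw [card_union_of_disjoint h] at this
  omega

theorem union_eq_of_subset_of_card_eq_three (hA : #A = 3) (hs : #s = 2) (ht : #t = 2)
    (hst : s ≠ t) (hsA : s ⊆ A) (htA : t ⊆ A) : s ∪ t = A :=
  eq_of_subset_of_card_le (union_subset hsA htA) <| by
    rw [card_union_eq_three_of_not_disjoint hs ht hst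
      (not_disjoint_of_subset_of_card_eq_three hA hs ht hsA htA), hA]

theorem inter_nonempty_or_subset_union {u : Finset α} (hu : #u = 2) (hsu : ¬Disjoint s u)
    (htu : ¬Disjoint t u) : (s ∩ t ∩ u).Nonempty ∨ u ⊆ s ∪ t := by
  obtain ⟨a, b, -, rfl⟩ := card_eq_two.1 hu
  simp only [disjoint_insert_right, disjoint_singleton_right, not_and_or, not_not] at hsu htu
  simp only [Finset.Nonempty, mem_inter, mem_insert, mem_singleton, insert_subset_iff,
    singleton_subset_iff, mem_union]
  grind

end Finset

theorem SimpleGraph.dist_eq_two_iff {V : Type*} {G : SimpleGraph V} {u v : V} :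
    G.dist u v = 2 ↔ u ≠ v ∧ ¬G.Adj u v ∧ (G.commonNeighbors u v).Nonempty := by
  rw [← edist_eq_two_iff]
  refine ⟨fun h => ?_, fun h => by rw [dist, h]; rfl⟩
  rw [← (Reachable.of_dist_ne_zero (h ▸ two_ne_zero)).coe_dist_eq_edist, h]
  rfl

theorem mem_perp_singleton {x y : Edge} : x ∈ perp {y} ↔ y = x ∨ Disjoint y.1 x.1 := by
  simp [perp]

theorem mem_perp_singleton_comm {x y : Edge} : x ∈ perp {y} ↔ y ∈ perp {x} := by
  simp only [mem_perp_singleton, eq_comm, disjoint_comm]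

theorem mem_perp_pair {x y z : Edge} : x ∈ perp {y, z} ↔ x ∈ perp {y} ∧ x ∈ perp {z} := by
  simp [perp]

theorem perp_anti {A B : Set Edge} (h : A ⊆ B) : perp B ⊆ perp A :=
  fun _ hy x hx => hy x (h hx)

theorem eq_of_disjoint_of_pairwise_disjoint {b t g x : Edge} (hbt : Disjoint b.1 t.1)
    (hbg : Disjoint b.1 g.1) (htg : Disjoint t.1 g.1) (hxb : Disjoint x.1 b.1)
    (hxt : Disjoint x.1 t.1) : x = g := by
  have hcover : b.1 ∪ t.1 ∪ x.1 = univ := eq_univ_of_card _ <| by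
    rw [card_union_of_disjoint (disjoint_union_left.2 ⟨hxb.symm, hxt.symm⟩),
      card_union_of_disjoint hbt, b.2, t.2, x.2]
    rfl
  have hgx : g.1 ⊆ x.1 := fun a ha => by
    have := hcover ▸ mem_univ a
    simp only [mem_union] at this
    rcases this with (h | h) | h
    exacts [absurd ha (disjoint_left.1 hbg h), absurd ha (disjoint_left.1 htg h), h]
  exact (Subtype.ext (eq_of_subset_of_card_le hgx (by rw [g.2, x.2]))).symm

theorem IsFactor.perp_pair_subset {T : Set Edge} (hT : IsFactor T) {e₁ e₂ : Edge}
    (h₁ : e₁ ∈ T) (h₂ : e₂ ∈ T) (hne : e₁ ≠ e₂) : perp {e₁, e₂} ⊆ T := by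
  obtain ⟨e₃, h₃, h₃'⟩ := Set.exists_mem_notMem_of_ncard_lt_ncard (s := {e₁, e₂}) (t := T)
    (by rw [Set.ncard_pair hne, hT.1]; norm_num)
  simp only [Set.mem_insert_iff, Set.mem_singleton_iff, not_or] at h₃'
  intro x hx
  rw [mem_perp_pair, mem_perp_singleton, mem_perp_singleton] at hx
  obtain ⟨rfl | h₁x, rfl | h₂x⟩ := hx
  · exact h₁
  · exact h₁
  · exact h₂
  · rw [eq_of_disjoint_of_pairwise_disjoint (hT.2 h₁ h₂ hne) (hT.2 h₁ h₃ (Ne.symm h₃'.1))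
      (hT.2 h₂ h₃ (Ne.symm h₃'.2)) h₁x.symm h₂x.symm]
    exact h₃

theorem IsFactor.perp_eq {T : Set Edge} (hT : IsFactor T) : perp T = T := by
  refine subset_antisymm ?_ fun y hy x hx => (eq_or_ne x y).imp id (hT.2 hx hy)
  obtain ⟨e₁, e₂, h₁, h₂, hne⟩ := (Set.one_lt_ncard_iff (s := T)).1 (by rw [hT.1]; norm_num)
  exact (perp_anti (Set.pair_subset h₁ h₂)).trans (hT.perp_pair_subset h₁ h₂ hne)

def edgesIn (A : Finset (Fin 6)) : Set Edge := {e | e.1 ⊆ A}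

theorem ncard_edgesIn (A : Finset (Fin 6)) : (edgesIn A).ncard = (#A).choose 2 := by
  have h : edgesIn A = Subtype.val ⁻¹' (A.powersetCard 2 : Set (Finset (Fin 6))) := by
    ext e
    simp [edgesIn, mem_powersetCard, e.2]
  rw [h, Set.ncard_preimage_of_injective_subset_range Subtype.val_injective, Set.ncard_coe_finset,
    card_powersetCard]
  intro s hs
  exact ⟨⟨s, (mem_powersetCard.1 hs).2⟩, rfl⟩

theorem perp_pair_subset_edgesIn_compl {A : Finset (Fin 6)} (hA : #A = 3) {e₁ e₂ : Edge}
    (h₁ : e₁ ∈ edgesIn A) (h₂ : e₂ ∈ edgesIn A) (hne : e₁ ≠ e₂) :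
    perp {e₁, e₂} ⊆ edgesIn Aᶜ := by
  have hmeet := not_disjoint_of_subset_of_card_eq_three hA e₁.2 e₂.2 h₁ h₂
  have hunion := union_eq_of_subset_of_card_eq_three hA e₁.2 e₂.2 (Subtype.coe_ne_coe.2 hne) h₁ h₂
  intro x hx
  rw [mem_perp_pair, mem_perp_singleton, mem_perp_singleton] at hx
  obtain ⟨rfl | h₁x, rfl | h₂x⟩ := hx
  · exact absurd rfl hne
  · exact absurd h₂x.symm hmeet
  · exact absurd h₁x hmeet
  · show x.1 ⊆ Aᶜ
    rw [subset_compl_iff_disjoint_right, ← hunion]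
    exact disjoint_union_right.2 ⟨h₁x.symm, h₂x.symm⟩

theorem perp_edgesIn {A : Finset (Fin 6)} (hA : #A = 3) : perp (edgesIn A) = edgesIn Aᶜ := by
  refine subset_antisymm ?_ fun y hy x hx =>
    Or.inr (disjoint_of_subset_left hx (disjoint_of_subset_right hy disjoint_compl_right))
  obtain ⟨e₁, e₂, h₁, h₂, hne⟩ := (Set.one_lt_ncard_iff (s := edgesIn A)).1
    (by rw [ncard_edgesIn, hA]; decide)
  exact (perp_anti (Set.pair_subset h₁ h₂)).trans (perp_pair_subset_edgesIn_compl hA h₁ h₂ hne)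

theorem ncard_setOf_mem (p : Fin 6) : {e : Edge | p ∈ e.1}.ncard = 5 := by
  rw [Set.ncard_eq_toFinset_card']
  revert p
  decide

theorem IsTriad.not_isCompleteTriad_of_forall_mem {T : Set Edge} {p : Fin 6} (hT : IsTriad T)
    (hp : ∀ e ∈ T, p ∈ e.1) : ¬IsCompleteTriad T := by
  rintro ⟨-, hmax⟩
  obtain ⟨e, hpe, heT⟩ := Set.exists_mem_notMem_of_ncard_lt_ncard (s := T)
    (t := {e : Edge | p ∈ e.1}) (by rw [hT.1, ncard_setOf_mem]; norm_num)
  have hp' : ∀ f ∈ insert e T, p ∈ f.1 := Set.forall_mem_insert.2 ⟨hpe, hp⟩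
  exact hmax ⟨insert e T, Set.subset_insert _ _, by rw [Set.ncard_insert_of_notMem heT, hT.1],
    fun f hf g hg _ => not_disjoint_iff.2 ⟨p, hp' f hf, hp' g hg⟩⟩

theorem IsCompleteTriad.exists_eq_edgesIn {T : Set Edge} (hT : IsCompleteTriad T) :
    ∃ A : Finset (Fin 6), #A = 3 ∧ T = edgesIn A := by
  obtain ⟨b, t, g, hbt, hbg, htg, rfl⟩ := Set.ncard_eq_three.1 hT.1.1
  have hmeet := hT.1.2
  have ibt : ¬Disjoint b.1 t.1 := hmeet (by simp) (by simp) hbt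
  rcases inter_nonempty_or_subset_union g.2 (hmeet (by simp) (by simp) hbg)
    (hmeet (by simp) (by simp) htg) with ⟨p, hp⟩ | hg
  · simp only [mem_inter] at hp
    refine absurd hT (hT.1.not_isCompleteTriad_of_forall_mem (p := p) ?_)
    simp [hp]
  · have hA := card_union_eq_three_of_not_disjoint b.2 t.2 (Subtype.coe_ne_coe.2 hbt) ibt
    refine ⟨b.1 ∪ t.1, hA, Set.eq_of_subset_of_ncard_le ?_ ?_⟩
    · simp [Set.insert_subset_iff, edgesIn, hg]
    · rw [ncard_edgesIn, hA, hT.1.1]; rfl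

theorem perp_pair_subset_perp {T : Set Edge} (hT : IsFactor T ∨ IsCompleteTriad T)
    {e₁ e₂ : Edge} (h₁ : e₁ ∈ T) (h₂ : e₂ ∈ T) (hne : e₁ ≠ e₂) : perp {e₁, e₂} ⊆ perp T := by
  rcases hT with hT | hT
  · rw [hT.perp_eq]
    exact hT.perp_pair_subset h₁ h₂ hne
  · obtain ⟨A, hA, rfl⟩ := hT.exists_eq_edgesIn
    rw [perp_edgesIn hA]
    exact perp_pair_subset_edgesIn_compl hA h₁ h₂ hne

theorem perp_pair_subset_of_mem_perp {T : Set Edge} (hT : IsFactor T ∨ IsCompleteTriad T)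
    {e₁ e₂ : Edge} (h₁ : e₁ ∈ perp T) (h₂ : e₂ ∈ perp T) (hne : e₁ ≠ e₂) : perp {e₁, e₂} ⊆ T := by
  rcases hT with hT | hT
  · rw [hT.perp_eq] at h₁ h₂
    exact hT.perp_pair_subset h₁ h₂ hne
  · obtain ⟨A, hA, rfl⟩ := hT.exists_eq_edgesIn
    rw [perp_edgesIn hA] at h₁ h₂
    have hAc : #Aᶜ = 3 := by rw [card_compl, hA]; rfl
    simpa only [compl_compl] using perp_pair_subset_edgesIn_compl hAc h₁ h₂ hne

section Lines

variable {L : Set NPoint}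

theorem IsLine.injOn_fst (hL : IsLine L) : L.InjOn (·.1.1) := by
  obtain ⟨T, σ, -, -, rfl⟩ := hL
  intro p hp q hq h
  exact Subtype.ext (Prod.ext h (by rw [hp.2, hq.2]; exact congrArg σ h))

theorem IsLine.injOn_snd (hL : IsLine L) : L.InjOn (·.1.2) := by
  obtain ⟨T, σ, -, hσ, rfl⟩ := hL
  intro p hp q hq h
  have h₁ : p.1.1 = q.1.1 := hσ.injOn hp.1 hq.1 (hp.2 ▸ hq.2 ▸ h)
  exact Subtype.ext (Prod.ext h₁ h)

theorem IsLine.perp_image_fst (hL : IsLine L) :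
    (IsFactor ((·.1.1) '' L) ∨ IsCompleteTriad ((·.1.1) '' L)) ∧
      perp ((·.1.1) '' L) = (·.1.2) '' L := by
  obtain ⟨T, σ, hT, hσ, rfl⟩ := hL
  have hfst : (·.1.1) '' {p : NPoint | p.1.1 ∈ T ∧ p.1.2 = σ p.1.1} = T := by
    refine subset_antisymm (by rintro _ ⟨p, hp, rfl⟩; exact hp.1) fun x hx => ?_
    exact ⟨⟨(x, σ x), hσ.mapsTo hx x hx⟩, ⟨hx, rfl⟩, rfl⟩
  have hsnd : (·.1.2) '' {p : NPoint | p.1.1 ∈ T ∧ p.1.2 = σ p.1.1} = σ '' T := by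
    conv_rhs => rw [← hfst]
    rw [Set.image_image]
    exact Set.image_congr fun p (hp : p.1.1 ∈ T ∧ p.1.2 = σ p.1.1) => hp.2
  rw [hsnd, hfst, hσ.image_eq]
  exact ⟨hT, rfl⟩

end Lines

@[simp] theorem inS_inj {p q : NPoint} : inS p = inS q ↔ p = q := Sum.inl_injective.eq_iff

@[simp] theorem inP_inj {x y : Edge} : inP x = inP y ↔ x = y :=
  ⟨fun h => Sum.inl_injective (Sum.inr_injective h), congrArg inP⟩

@[simp] theorem inP'_inj {u v : Edge} : inP' u = inP' v ↔ u = v :=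
  ⟨fun h => Sum.inr_injective (Sum.inr_injective h), congrArg inP'⟩

@[simp] theorem inS_ne_inP (p : NPoint) (x : Edge) : inS p ≠ inP x := Sum.inl_ne_inr

@[simp] theorem inS_ne_inP' (p : NPoint) (u : Edge) : inS p ≠ inP' u := Sum.inl_ne_inr

@[simp] theorem inP_ne_inP' (x u : Edge) : inP x ≠ inP' u :=
  fun h => Sum.inl_ne_inr (Sum.inr_injective h)

@[simp] theorem inP_ne_inS (x : Edge) (p : NPoint) : inP x ≠ inS p := (inS_ne_inP p x).symm

@[simp] theorem inP'_ne_inS (u : Edge) (p : NPoint) : inP' u ≠ inS p := (inS_ne_inP' p u).symm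

@[simp] theorem inP'_ne_inP (u x : Edge) : inP' u ≠ inP x := (inP_ne_inP' x u).symm

theorem bg_adj_iff_of_ne_inS {α β : BPoint} (hα : ∀ p, inS p ≠ α) :
    BG.Adj α β ↔ α ≠ β ∧ ∃ p : NPoint,
      α ∈ ({inP p.1.1, inS p, inP' p.1.2} : Set BPoint) ∧
        β ∈ ({inP p.1.1, inS p, inP' p.1.2} : Set BPoint) := by
  constructor
  · rintro ⟨hne, L, ⟨L₀, -, rfl⟩ | ⟨p, rfl⟩, hαL, hβL⟩
    · obtain ⟨p, -, hp⟩ := hαL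
      exact absurd hp (hα p)
    · exact ⟨hne, p, hαL, hβL⟩
  · rintro ⟨hne, p, hαL, hβL⟩
    exact ⟨hne, _, Or.inr ⟨p, rfl⟩, hαL, hβL⟩

theorem bg_adj_inP_inS_iff {x : Edge} {p : NPoint} : BG.Adj (inP x) (inS p) ↔ p.1.1 = x := by
  rw [bg_adj_iff_of_ne_inS (inS_ne_inP · x)]
  simp [eq_comm]

theorem bg_adj_inP'_inS_iff {u : Edge} {p : NPoint} : BG.Adj (inP' u) (inS p) ↔ p.1.2 = u := by
  rw [bg_adj_iff_of_ne_inS (inS_ne_inP' · u)]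
  simp [eq_comm]

theorem bg_not_adj_inP_inP {x y : Edge} : ¬BG.Adj (inP x) (inP y) := by
  rw [bg_adj_iff_of_ne_inS (inS_ne_inP · x)]
  rintro ⟨hne, p, hx, hy⟩
  simp only [Set.mem_insert_iff, Set.mem_singleton_iff, inP_inj, inP_ne_inS, inP_ne_inP',
    or_false] at hx hy
  exact hne (by rw [hx, hy])

theorem bg_not_adj_inP'_inP' {u v : Edge} : ¬BG.Adj (inP' u) (inP' v) := by
  rw [bg_adj_iff_of_ne_inS (inS_ne_inP' · u)]
  rintro ⟨hne, p, hu, hv⟩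
  simp only [Set.mem_insert_iff, Set.mem_singleton_iff, inP'_inj, inP'_ne_inS, inP'_ne_inP,
    false_or] at hu hv
  exact hne (by rw [hu, hv])

theorem mem_perp_of_bg_adj_inP_inP' {x u : Edge} (h : BG.Adj (inP x) (inP' u)) :
    u ∈ perp {x} := by
  rw [bg_adj_iff_of_ne_inS (inS_ne_inP · x)] at h
  obtain ⟨-, p, hx, hu⟩ := h
  simp only [Set.mem_insert_iff, Set.mem_singleton_iff, inP_inj, inP_ne_inS, inP_ne_inP',
    inP'_inj, inP'_ne_inS, inP'_ne_inP, or_false, false_or] at hx hu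
  rw [mem_perp_singleton, hx, hu]
  exact p.2

theorem ng_adj_of_bg_adj {p q : NPoint} (h : BG.Adj (inS p) (inS q)) : NG.Adj p q := by
  obtain ⟨hne, L, ⟨L₀, hL₀, rfl⟩ | ⟨r, rfl⟩, hp, hq⟩ := h
  · simp only [Set.mem_image, inS_inj, exists_eq_right] at hp hq
    exact ⟨fun h => hne (congrArg inS h), L₀, hL₀, hp, hq⟩
  · simp only [Set.mem_insert_iff, Set.mem_singleton_iff, inS_inj, inS_ne_inP, inS_ne_inP',
      or_false, false_or] at hp hq
    exact absurd (congrArg inS (hp.trans hq.symm)) hne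

theorem snd_mem_perp_of_ng_adj {p q : NPoint} (h : NG.Adj p q) : q.1.2 ∈ perp {p.1.1} := by
  obtain ⟨-, L, ⟨T, σ, -, hσ, rfl⟩, hp, hq⟩ := h
  exact mem_perp_singleton.2 ((hq.2 ▸ hσ.mapsTo hq.1) p.1.1 hp.1)

theorem ne_and_mem_perp_of_dist_inP_inS_eq_two {x : Edge} {p : NPoint} (h : BG.dist (inP x) (inS p) = 2) :
    p.1.1 ≠ x ∧ x ∈ perp {p.1.2} := by
  obtain ⟨-, hnadj, m, hxm, hpm⟩ := SimpleGraph.dist_eq_two_iff.1 h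
  refine ⟨fun hpx => hnadj (bg_adj_inP_inS_iff.2 hpx), ?_⟩
  rcases m with q | y | u
  · rw [← bg_adj_inP_inS_iff.1 hxm, mem_perp_singleton_comm]
    exact snd_mem_perp_of_ng_adj (ng_adj_of_bg_adj hpm.symm)
  · exact absurd hxm bg_not_adj_inP_inP
  · rw [bg_adj_inP'_inS_iff.1 hpm.symm, mem_perp_singleton_comm]
    exact mem_perp_of_bg_adj_inP_inP' hxm

theorem ne_and_mem_perp_of_dist_inP'_inS_eq_two {u : Edge} {p : NPoint} (h : BG.dist (inP' u) (inS p) = 2) :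
    p.1.2 ≠ u ∧ u ∈ perp {p.1.1} := by
  obtain ⟨-, hnadj, m, hum, hpm⟩ := SimpleGraph.dist_eq_two_iff.1 h
  refine ⟨fun hpu => hnadj (bg_adj_inP'_inS_iff.2 hpu), ?_⟩
  rcases m with q | y | v
  · rw [← bg_adj_inP'_inS_iff.1 hum]
    exact snd_mem_perp_of_ng_adj (ng_adj_of_bg_adj hpm)
  · rw [bg_adj_inP_inS_iff.1 hpm.symm]
    exact mem_perp_of_bg_adj_inP_inP' hum.symm
  · exact absurd hum bg_not_adj_inP'_inP'

theorem statement16_general (β θ γ : NPoint)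
    (hβθ : β ≠ θ)
    (hL : IsLine {β, θ, γ}) (α : BPoint)
    (hα : (∃ x : Edge, α = inP x) ∨ (∃ u : Edge, α = inP' u))
    (h1 : BG.dist α (inS β) = 2) (h2 : BG.dist α (inS θ) = 2) :
    BG.Adj α (inS γ) := by
  have hfst : β.1.1 ≠ θ.1.1 := fun h => hβθ (hL.injOn_fst (by simp) (by simp) h)
  have hsnd : β.1.2 ≠ θ.1.2 := fun h => hβθ (hL.injOn_snd (by simp) (by simp) h)
  obtain ⟨hT, hperp⟩ := hL.perp_image_fst
  simp only [Set.image_insert_eq, Set.image_singleton] at hT hperp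
  rcases hα with ⟨x, rfl⟩ | ⟨u, rfl⟩
  · obtain ⟨hβx, hxβ⟩ := ne_and_mem_perp_of_dist_inP_inS_eq_two h1
    obtain ⟨hθx, hxθ⟩ := ne_and_mem_perp_of_dist_inP_inS_eq_two h2
    have hx := perp_pair_subset_of_mem_perp hT (by simp [hperp]) (by simp [hperp]) hsnd
      (mem_perp_pair.2 ⟨hxβ, hxθ⟩)
    simp only [Set.mem_insert_iff, Set.mem_singleton_iff] at hx
    rcases hx with hx | hx | hx
    exacts [absurd hx.symm hβx, absurd hx.symm hθx, bg_adj_inP_inS_iff.2 hx.symm]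
  · obtain ⟨hβu, huβ⟩ := ne_and_mem_perp_of_dist_inP'_inS_eq_two h1
    obtain ⟨hθu, huθ⟩ := ne_and_mem_perp_of_dist_inP'_inS_eq_two h2
    have hu := perp_pair_subset_perp hT (by simp) (by simp) hfst (mem_perp_pair.2 ⟨huβ, huθ⟩)
    simp only [hperp, Set.mem_insert_iff, Set.mem_singleton_iff] at hu
    rcases hu with hu | hu | hu
    exacts [absurd hu.symm hβu, absurd hu.symm hθu, bg_adj_inP'_inS_iff.2 hu.symm]

/-- If `L = {β,θ,γ} ∈ 𝓛` is a line of 𝕊 contained in 𝓟 and `α ∈ P ∪ P'`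
with `d(α,β) = d(α,θ) = 2` in 𝕊, then `α` is collinear with `γ` in 𝕊. -/
theorem statement16 (β θ γ : NPoint)
    (hβθ : β ≠ θ) (hβγ : β ≠ γ) (hθγ : θ ≠ γ)
    (hL : IsLine {β, θ, γ}) (α : BPoint)
    (hα : (∃ x : Edge, α = inP x) ∨ (∃ u : Edge, α = inP' u))
    (h1 : BG.dist α (inS β) = 2) (h2 : BG.dist α (inS θ) = 2) :
    BG.Adj α (inS γ) :=
  statement16_general β θ γ hβθ hL α hα h1 h2
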